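/- Let Φ be a Young function satisfying the Δ2-condition and let (ξ_n) be a disjointly supported sequence in L_{Φ*} (ξ_n = ξ_n·1_{A_n} with (A_n) ⊂ F pairwise disjoint) with sup_n ‖ξ_n‖_{Φ*} < ∞. Then there exists a sequence of forward convex combinations ξ̄_n ∈ conv(ξ_k : k ≥ n) that is order bounded in L_{Φ*} (i.e. sup_n |ξ̄_n| ∈ L_{Φ*}) and norm null (‖ξ̄_n‖_{Φ*} → 0). -/

import Mathlib

open MeasureTheory Filter Topology Set
open scoped ENNReal

noncomputable section

namespace OrliczPaper

variable {Ω : Type*} [MeasurableSpace Ω]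

/-- A (finite, coercive) Young function: an even convex function with `Φ 0 = 0`
and `Φ x / x → ∞` as `x → ∞`. -/
structure IsYoung (Φ : ℝ → ℝ) : Prop where
  even : ∀ x, Φ (-x) = Φ x
  convexOn : ConvexOn ℝ Set.univ Φ
  map_zero : Φ 0 = 0
  coercive : Tendsto (fun x => Φ x / x) atTop atTop

/-- The Δ₂-condition: `limsup_{x→∞} Φ(2x)/Φ(x) < ∞`, i.e. `Φ(2x) ≤ C Φ(x)`
for all large `x`. -/
def Delta2 (Φ : ℝ → ℝ) : Prop :=
  ∃ C x₀ : ℝ, ∀ x ≥ x₀, Φ (2 * x) ≤ C * Φ x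

/-- The conjugate Young function `Φ*(y) = sup_x (x y − Φ x)`. -/
def conj (Φ : ℝ → ℝ) (y : ℝ) : ℝ := ⨆ x : ℝ, x * y - Φ x

variable (P : Measure Ω)

/-- Membership in the Orlicz space `L_Φ`: a measurable function with
`E[Φ(l ξ)] < ∞` for some `l > 0`. -/
def MemOrlicz (Φ : ℝ → ℝ) (f : Ω → ℝ) : Prop :=
  Measurable f ∧ ∃ l : ℝ, 0 < l ∧ ∫⁻ ω, ENNReal.ofReal (Φ (l * f ω)) ∂P < ⊤

/-- The Orlicz space `L_Φ`, as a set of (everywhere defined) measurable functions. -/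
def Orlicz (Φ : ℝ → ℝ) : Set (Ω → ℝ) := {f | MemOrlicz P Φ f}

/-- The Luxemburg norm `‖f‖_Φ = inf {l > 0 : E[Φ(f/l)] ≤ 1}`. -/
def luxNorm (Φ : ℝ → ℝ) (f : Ω → ℝ) : ℝ :=
  sInf {l : ℝ | 0 < l ∧ ∫⁻ ω, ENNReal.ofReal (Φ (f ω / l)) ∂P ≤ 1}

/-- The Orlicz (dual) norm `‖f‖_{(Φ*)} = sup {E[g f] : E[Φ(g)] ≤ 1}`
(the Young function `Φ` here is the one of the *predual*). -/
def orliczNorm (Φ : ℝ → ℝ) (f : Ω → ℝ) : ℝ :=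
  sSup {r : ℝ | ∃ g : Ω → ℝ, Measurable g ∧
    (∫⁻ ω, ENNReal.ofReal (Φ (g ω)) ∂P) ≤ 1 ∧ r = ∫ ω, g ω * f ω ∂P}

/-- The bilinear pairing `⟨f, g⟩ = E[f g]`. -/
def pairing (f g : Ω → ℝ) : ℝ := ∫ ω, f ω * g ω ∂P

/-- The weak topology `σ(E, F)` on `E` induced by the pairing with `F`. -/
def weakT (E F : Set (Ω → ℝ)) : TopologicalSpace E :=
  TopologicalSpace.induced
    (fun ξ : E => fun η : F => pairing P (ξ : Ω → ℝ) (η : Ω → ℝ)) inferInstance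

/-- The absolutely convex (convex and balanced) `σ(F,E)`-compact subsets of `F`. -/
def dualSets (E F : Set (Ω → ℝ)) : Set (Set F) :=
  {A | Convex ℝ (Subtype.val '' A) ∧ Balanced ℝ (Subtype.val '' A) ∧
    @IsCompact _ (weakT P F E) A}

/-- The Mackey topology `τ(E, F)`: the topology on `E` of uniform convergence on
absolutely convex `σ(F,E)`-compact subsets of `F`. -/
def mackeyT (E F : Set (Ω → ℝ)) : TopologicalSpace E :=
  TopologicalSpace.induced
    (fun ξ : E => UniformOnFun.ofFun (dualSets P E F)
      (fun η : F => pairing P (ξ : Ω → ℝ) (η : Ω → ℝ)))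
    inferInstance

/-- A distance generating the topology of convergence in `P`-probability. -/
def probDist (f g : Ω → ℝ) : ℝ := ∫ ω, min |f ω - g ω| 1 ∂P

/-- The topology of convergence in probability, restricted to `E ⊆ L₀`. -/
def probT (E : Set (Ω → ℝ)) : TopologicalSpace E :=
  TopologicalSpace.generateFrom
    {U | ∃ f : E, ∃ ε : ℝ, 0 < ε ∧ U = {g : E | probDist P (f : Ω → ℝ) (g : Ω → ℝ) < ε}}

/-- `L_∞`: essentially bounded measurable functions. -/
def Linf : Set (Ω → ℝ) := {f | Measurable f ∧ ∃ C : ℝ, ∀ᵐ ω ∂P, |f ω| ≤ C}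

/-- `L_1`: integrable measurable functions. -/
def L1 : Set (Ω → ℝ) := {f | Measurable f ∧ Integrable f P}

/-- The essential supremum norm. -/
def linfNorm (f : Ω → ℝ) : ℝ := sInf {C : ℝ | 0 ≤ C ∧ ∀ᵐ ω ∂P, |f ω| ≤ C}

/-- Uniform integrability of a set of functions:
`sup_{f ∈ A} E[|f| 1_{|f| > N}] → 0`. -/
def UnifInt (A : Set (Ω → ℝ)) : Prop :=
  Tendsto (fun N : ℕ => ⨆ f ∈ A, ∫⁻ ω in {ω | (N : ℝ) < |f ω|}, ENNReal.ofReal |f ω| ∂P)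
    atTop (𝓝 0)

/-- Uniform integrability of a sequence of functions. -/
def UnifIntSeq (g : ℕ → Ω → ℝ) : Prop :=
  Tendsto (fun N : ℕ => ⨆ n, ∫⁻ ω in {ω | (N : ℝ) < |g n ω|}, ENNReal.ofReal |g n ω| ∂P)
    atTop (𝓝 0)

/-- The Cesàro means of a sequence of functions: `cesaro ξ N` is the average of
`ξ 0, …, ξ N`. -/
def cesaro (ξ : ℕ → Ω → ℝ) (N : ℕ) : Ω → ℝ :=
  fun ω => (∑ i ∈ Finset.range (N + 1), ξ i ω) / (N + 1)

/-- `sup_n |ξ n| ∈ L_Φ` (order boundedness of the sequence `ξ` in `L_Φ`). -/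
def supMem (Φ : ℝ → ℝ) (ξ : ℕ → Ω → ℝ) : Prop :=
  (∀ᵐ ω ∂P, BddAbove (Set.range fun n => |ξ n ω|)) ∧
    MemOrlicz P Φ (fun ω => ⨆ n, |ξ n ω|)

/-- `ξb` is a sequence of forward convex combinations of `ξ`:
`ξb n ∈ conv (ξ k ; k ≥ n)`. -/
def FwdConvComb (ξ ξb : ℕ → Ω → ℝ) : Prop :=
  ∀ n, ξb n ∈ convexHull ℝ {g : Ω → ℝ | ∃ k ≥ n, g = ξ k}

/-- The left derivative of a convex function. -/
def leftDeriv (Φ : ℝ → ℝ) (y : ℝ) : ℝ :=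
  ⨆ h : {h : ℝ // 0 < h}, (Φ y - Φ (y - (h : ℝ))) / (h : ℝ)

/-- `p_Φ(x) = sup_{y > x} y Φ'(y) / Φ(y)`. -/
def pPhiAt (Φ : ℝ → ℝ) (x : ℝ) : ℝ≥0∞ :=
  ⨆ y : {y : ℝ // x < y}, ENNReal.ofReal ((y : ℝ) * leftDeriv Φ (y : ℝ) / Φ (y : ℝ))

/-- `p_Φ = inf_{x ≥ 0} p_Φ(x)`. -/
def pPhi (Φ : ℝ → ℝ) : ℝ≥0∞ := ⨅ x : {x : ℝ // 0 ≤ x}, pPhiAt Φ x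

/-- `q_Φ = p_Φ / (p_Φ − 1)` (with `1/0 = ∞`). -/
def qPhi (Φ : ℝ → ℝ) : ℝ≥0∞ := pPhi Φ / (pPhi Φ - 1)

end OrliczPaper

namespace OrliczPaper

section ConjBasics

variable {Φ : ℝ → ℝ}

lemma IsYoung.nonneg (hΦ : IsYoung Φ) (x : ℝ) : 0 ≤ Φ x := by
  have h := hΦ.convexOn.2 (Set.mem_univ x) (Set.mem_univ (-x))
    (by norm_num : (0:ℝ) ≤ 1/2) (by norm_num : (0:ℝ) ≤ 1/2) (by norm_num)
  simp only [smul_eq_mul, hΦ.even] at h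
  have hx : (1/2 : ℝ) * x + (1/2) * (-x) = 0 := by ring
  rw [hx, hΦ.map_zero] at h
  linarith

lemma IsYoung.linear_lower (hΦ : IsYoung Φ) (c : ℝ) :
    ∃ R : ℝ, 1 ≤ R ∧ ∀ x : ℝ, R ≤ x → c * x ≤ Φ x := by
  obtain ⟨R₀, hR₀⟩ := (hΦ.coercive.eventually_ge_atTop c).exists_forall_of_atTop
  refine ⟨max R₀ 1, le_max_right _ _, fun x hx => ?_⟩
  have hx1 : (1:ℝ) ≤ x := le_trans (le_max_right _ _) hx
  have h := hR₀ x (le_trans (le_max_left _ _) hx)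
  rwa [le_div_iff₀ (by linarith)] at h

lemma IsYoung.term_le (hΦ : IsYoung Φ) (y : ℝ) :
    ∃ R : ℝ, 1 ≤ R ∧ ∀ x : ℝ, x * y - Φ x ≤ R * |y| := by
  obtain ⟨R, hR1, hR⟩ := hΦ.linear_lower (|y| + 1)
  refine ⟨R, hR1, fun x => ?_⟩
  rcases le_total x (-R) with hx | hx
  · have h1 : (|y| + 1) * (-x) ≤ Φ (-x) := hR _ (by linarith)
    have h2 : Φ (-x) = Φ x := hΦ.even x
    have h3 : x * y ≤ (-x) * |y| := by
      nlinarith [le_abs_self y, neg_abs_le y]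
    nlinarith [abs_nonneg y, mul_nonneg (le_trans zero_le_one hR1) (abs_nonneg y)]
  · rcases le_total x R with hx2 | hx2
    · have h3 : x * y ≤ |x| * |y| := by rw [← abs_mul]; exact le_abs_self _
      have h4 : |x| ≤ R := abs_le.mpr ⟨hx, hx2⟩
      nlinarith [hΦ.nonneg x, abs_nonneg y, abs_nonneg x]
    · have h1 : (|y| + 1) * x ≤ Φ x := hR _ hx2
      have h3 : x * y ≤ x * |y| := mul_le_mul_of_nonneg_left (le_abs_self y) (by linarith)
      nlinarith [mul_nonneg (le_trans zero_le_one hR1) (abs_nonneg y)]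

lemma IsYoung.bddAbove (hΦ : IsYoung Φ) (y : ℝ) :
    BddAbove (Set.range fun x : ℝ => x * y - Φ x) := by
  obtain ⟨R, _, hR⟩ := hΦ.term_le y
  exact ⟨R * |y|, by rintro _ ⟨x, rfl⟩; exact hR x⟩

lemma le_conj (hΦ : IsYoung Φ) (x y : ℝ) : x * y - Φ x ≤ conj Φ y :=
  le_ciSup (hΦ.bddAbove y) x

lemma conj_le (hΦ : IsYoung Φ) {y b : ℝ} (h : ∀ x : ℝ, x * y - Φ x ≤ b) :
    conj Φ y ≤ b := ciSup_le h

lemma conj_nonneg (hΦ : IsYoung Φ) (y : ℝ) : 0 ≤ conj Φ y := by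
  have := le_conj hΦ 0 y
  simpa [hΦ.map_zero] using this

lemma conj_zero (hΦ : IsYoung Φ) : conj Φ 0 = 0 :=
  le_antisymm (conj_le hΦ fun x => by simpa using hΦ.nonneg x) (conj_nonneg hΦ 0)

lemma conj_even (hΦ : IsYoung Φ) (y : ℝ) : conj Φ (-y) = conj Φ y := by
  have h : ∀ y : ℝ, conj Φ (-y) ≤ conj Φ y := by
    intro y
    refine conj_le hΦ fun x => ?_
    have := le_conj hΦ (-x) y
    rw [hΦ.even] at this
    linarith [this]
  refine le_antisymm (h y) ?_
  have := h (-y); rwa [neg_neg] at this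

lemma conj_mono (hΦ : IsYoung Φ) {a b : ℝ} (h0 : 0 ≤ a) (hab : a ≤ b) :
    conj Φ a ≤ conj Φ b := by
  refine conj_le hΦ fun x => ?_
  have h1 : x * a ≤ |x| * b :=
    le_trans (mul_le_mul_of_nonneg_right (le_abs_self x) h0)
      (mul_le_mul_of_nonneg_left hab (abs_nonneg x))
  have h2 : Φ |x| = Φ x := by
    rcases abs_cases x with ⟨h, _⟩ | ⟨h, _⟩
    · rw [h]
    · rw [h, hΦ.even]
  have := le_conj hΦ |x| b
  rw [h2] at this
  linarith

lemma conj_abs (hΦ : IsYoung Φ) (y : ℝ) : conj Φ |y| = conj Φ y := by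
  rcases abs_cases y with ⟨h, _⟩ | ⟨h, _⟩
  · rw [h]
  · rw [h, conj_even hΦ]

lemma conj_mono_abs (hΦ : IsYoung Φ) {a b : ℝ} (h : |a| ≤ |b|) :
    conj Φ a ≤ conj Φ b := by
  rw [← conj_abs hΦ a, ← conj_abs hΦ b]
  exact conj_mono hΦ (abs_nonneg a) h

lemma conj_measurable (hΦ : IsYoung Φ) : Measurable (conj Φ) := by
  have hmono : Monotone fun s : ℝ => conj Φ (max s 0) := fun s t hst =>
    conj_mono hΦ (le_max_right _ _) (max_le_max hst le_rfl)
  have h1 : Measurable fun y : ℝ => conj Φ (max |y| 0) := hmono.measurable.comp measurable_abs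
  have h2 : (conj Φ) = fun y : ℝ => conj Φ (max |y| 0) := by
    funext y
    rw [max_eq_left (abs_nonneg y), conj_abs hΦ]
  rw [h2]; exact h1

lemma conj_small (hΦ : IsYoung Φ) :
    ∃ R : ℝ, 1 ≤ R ∧ ∀ y : ℝ, 0 ≤ y → y ≤ 1 → conj Φ y ≤ R * y := by
  obtain ⟨R, hR1, hR⟩ := hΦ.linear_lower 2
  refine ⟨R, hR1, fun y hy0 hy1 => ?_⟩
  refine conj_le hΦ fun x => ?_
  rcases le_total x 0 with hx | hx
  · have : x * y ≤ 0 := mul_nonpos_of_nonpos_of_nonneg hx hy0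
    nlinarith [hΦ.nonneg x, mul_nonneg (le_trans zero_le_one hR1) hy0]
  · rcases le_total x R with hx2 | hx2
    · nlinarith [hΦ.nonneg x]
    · have h1 := hR x hx2
      have h2 : x * y ≤ x * 1 := mul_le_mul_of_nonneg_left hy1 hx
      nlinarith [mul_nonneg (le_trans zero_le_one hR1) hy0]

end ConjBasics

section Nabla2

variable {Φ : ℝ → ℝ}

lemma nabla2 (hΦ : IsYoung Φ) (hΔ : Delta2 Φ) :
    ∃ ℓ y₀ : ℝ, 2 ≤ ℓ ∧ 0 ≤ y₀ ∧ ∀ y : ℝ, y₀ ≤ y → conj Φ y ≤ conj Φ (ℓ * y) / (2 * ℓ) := by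
  obtain ⟨C, x₀, hC⟩ := hΔ
  set c : ℝ := max C 3 with hc
  set u : ℝ := max x₀ 1 with hu
  have hc3 : (3:ℝ) ≤ c := le_max_right _ _
  have hu1 : (1:ℝ) ≤ u := le_max_right _ _
  have hΔ' : ∀ x : ℝ, u ≤ x → Φ (2 * x) ≤ c * Φ x := fun x hx =>
    le_trans (hC x (le_trans (le_max_left _ _) hx))
      (mul_le_mul_of_nonneg_right (le_max_left C 3) (hΦ.nonneg x))
  have hΔ4 : ∀ x : ℝ, u ≤ x → Φ (4 * x) ≤ c ^ 2 * Φ x := by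
    intro x hx
    have hx0 : (1:ℝ) ≤ x := le_trans hu1 hx
    have h2 : Φ (2 * (2 * x)) ≤ c * Φ (2 * x) := hΔ' _ (by nlinarith)
    have h1 : Φ (2 * x) ≤ c * Φ x := hΔ' x hx
    have h4 : (4:ℝ) * x = 2 * (2 * x) := by ring
    rw [h4]
    calc Φ (2 * (2 * x)) ≤ c * Φ (2 * x) := h2
      _ ≤ c * (c * Φ x) := mul_le_mul_of_nonneg_left h1 (by linarith)
      _ = c ^ 2 * Φ x := by ring
  refine ⟨c ^ 2 / 4, 2 * Φ u, by nlinarith, by linarith [hΦ.nonneg u], ?_⟩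
  set ℓ : ℝ := c ^ 2 / 4 with hℓ
  have hℓ2 : (2:ℝ) ≤ ℓ := by rw [hℓ]; nlinarith
  have hℓpos : (0:ℝ) < ℓ := by linarith
  intro y hy
  have hΦu : 0 ≤ Φ u := hΦ.nonneg u
  have hy0 : 0 ≤ y := le_trans (by linarith) hy
  have key : ∀ v : ℝ, u ≤ v → c ^ 2 * (v * y - Φ v) ≤ conj Φ (ℓ * y) := by
    intro v hv
    have h1 := le_conj hΦ (4 * v) (ℓ * y)
    have h2 := hΔ4 v hv
    have h3 : (4 * v) * (ℓ * y) = c ^ 2 * (v * y) := by rw [hℓ]; ring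
    nlinarith [h1, h2]
  have hconjℓ : 0 ≤ conj Φ (ℓ * y) := conj_nonneg hΦ _
  refine conj_le hΦ fun x => ?_
  rw [le_div_iff₀ (by linarith)]
  rcases le_or_gt u x with hx | hx
  · have hk := key x hx
    rcases le_or_gt (x * y - Φ x) 0 with h0 | h0
    · nlinarith
    · nlinarith
  · have h1 : x * y - Φ x ≤ u * y := by
      have : x * y ≤ u * y := mul_le_mul_of_nonneg_right hx.le hy0
      linarith [hΦ.nonneg x]
    have h2 := key u le_rfl
    -- conj Φ (ℓ y) ≥ c² u y - c² Φ u ≥ c² u y / 2  (since u y ≥ y ≥ 2 Φ u)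
    have h3 : y ≤ u * y := by nlinarith
    have h4 : 2 * Φ u ≤ u * y := le_trans hy h3
    -- goal : (x * y - Φ x) * (2 * ℓ) ≤ conj Φ (ℓ * y), with 2ℓ = c²/2
    have h5 : (x * y - Φ x) * (2 * ℓ) ≤ (u * y) * (2 * ℓ) :=
      mul_le_mul_of_nonneg_right h1 (by linarith)
    have h6 : (u * y) * (2 * ℓ) = c ^ 2 * (u * y) / 2 := by rw [hℓ]; ring
    nlinarith
  
lemma conj_div_pow_le (hΦ : IsYoung Φ) {ℓ y₀ : ℝ} (hℓ2 : 2 ≤ ℓ) (hy₀ : 0 ≤ y₀)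
    (h : ∀ y : ℝ, y₀ ≤ y → conj Φ y ≤ conj Φ (ℓ * y) / (2 * ℓ)) :
    ∀ (j : ℕ) (z : ℝ), 0 ≤ z →
      conj Φ (z / ℓ ^ j) ≤ conj Φ z / (2 * ℓ) ^ j + 2 * conj Φ y₀ := by
  have hℓ0 : (0:ℝ) < ℓ := by linarith
  have h2ℓ : (0:ℝ) < 2 * ℓ := by linarith
  have single : ∀ w : ℝ, 0 ≤ w → conj Φ (w / ℓ) ≤ conj Φ w / (2 * ℓ) + conj Φ y₀ := by
    intro w hw
    rcases le_or_gt y₀ (w / ℓ) with h1 | h1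
    · have h2 := h (w / ℓ) h1
      rw [mul_div_cancel₀ _ (ne_of_gt hℓ0)] at h2
      linarith [conj_nonneg hΦ y₀]
    · have h2 := conj_mono hΦ (div_nonneg hw hℓ0.le) h1.le
      have h3 := div_nonneg (conj_nonneg hΦ w) h2ℓ.le
      linarith
  intro j
  induction j with
  | zero =>
    intro z hz
    simp only [pow_zero, div_one]
    linarith [conj_nonneg hΦ y₀, conj_nonneg hΦ z]
  | succ j ih =>
    intro z hz
    have h1 : z / ℓ ^ (j + 1) = (z / ℓ ^ j) / ℓ := by
      rw [div_div, pow_succ]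
    rw [h1]
    have h2 := single (z / ℓ ^ j) (div_nonneg hz (pow_pos hℓ0 j).le)
    have h3 := ih z hz
    have h4 : conj Φ (z / ℓ ^ j) / (2 * ℓ) ≤
        (conj Φ z / (2 * ℓ) ^ j + 2 * conj Φ y₀) / (2 * ℓ) :=
      div_le_div_of_nonneg_right h3 h2ℓ.le
    have h5 : (conj Φ z / (2 * ℓ) ^ j + 2 * conj Φ y₀) / (2 * ℓ)
        = conj Φ z / (2 * ℓ) ^ (j + 1) + 2 * conj Φ y₀ / (2 * ℓ) := by
      rw [pow_succ]
      field_simp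
    have h6 : 2 * conj Φ y₀ / (2 * ℓ) ≤ conj Φ y₀ := by
      rw [div_le_iff₀ h2ℓ]
      nlinarith [conj_nonneg hΦ y₀]
    rw [h5] at h4
    linarith

end Nabla2

section MeasureAux

variable {Ω : Type*} [MeasurableSpace Ω] {Φ : ℝ → ℝ}

lemma lux_nonneg (P : Measure Ω) (Ψ : ℝ → ℝ) (f : Ω → ℝ) : 0 ≤ luxNorm P Ψ f :=
  Real.sInf_nonneg fun _ hx => hx.1.le

lemma lux_le (P : Measure Ω) (Ψ : ℝ → ℝ) (f : Ω → ℝ) {l : ℝ} (hl : 0 < l)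
    (h : ∫⁻ ω, ENNReal.ofReal (Ψ (f ω / l)) ∂P ≤ 1) : luxNorm P Ψ f ≤ l :=
  csInf_le ⟨0, fun _ hx => hx.1.le⟩ ⟨hl, h⟩

lemma exists_integral_le_one (P : Measure Ω) [IsProbabilityMeasure P]
    (hΦ : IsYoung Φ) {f : Ω → ℝ} (hf : Measurable f) {l₀ : ℝ} (hl₀ : 0 < l₀)
    (hfin : ∫⁻ ω, ENNReal.ofReal (conj Φ (l₀ * f ω)) ∂P < ⊤) :
    ∃ l : ℝ, 0 < l ∧ ∫⁻ ω, ENNReal.ofReal (conj Φ (f ω / l)) ∂P ≤ 1 := by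
  obtain ⟨R, hR1, hRs⟩ := conj_small hΦ
  have hRpos : (0:ℝ) < R := by linarith
  set g : Ω → ℝ≥0∞ := fun ω => ENNReal.ofReal (conj Φ (l₀ * f ω)) with hg
  have hgmeas : Measurable g :=
    ((conj_measurable hΦ).comp (measurable_const.mul hf)).ennreal_ofReal
  set I : ℝ≥0∞ := ∫⁻ ω, g ω ∂P with hI
  have hIfin : I ≠ ⊤ := hfin.ne
  -- the sets
  set S : ℕ → Set Ω := fun j => {ω | 1 / l₀ + j < |f ω|} with hS
  have hSmeas : ∀ j, MeasurableSet (S j) :=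
    fun j => measurableSet_lt measurable_const hf.abs
  set e : ℝ≥0∞ := ENNReal.ofReal (1 / 2) with he
  -- find j with small tail integral
  have hexj : ∃ j : ℕ, ∫⁻ ω, (S j).indicator g ω ∂P ≤ e := by
    by_cases hIe : I ≤ e
    · exact ⟨0, le_trans (lintegral_mono fun ω => Set.indicator_le_self _ _ _) hIe⟩
    · push_neg at hIe
      set h : ℕ → Ω → ℝ≥0∞ := fun j => (S j)ᶜ.indicator g with hh
      have hcompl : ∀ j, ∀ ω, (S j).indicator g ω + (S j)ᶜ.indicator g ω = g ω :=
        fun j ω => Set.indicator_self_add_compl_apply (S j) g ω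
      have hmono : ∀ ω, Monotone fun j => h j ω := by
        intro ω j k hjk
        simp only [hh, Set.indicator]
        by_cases hω : ω ∈ (S j)ᶜ
        · have hω' : ω ∈ (S k)ᶜ := by
            simp only [hS, Set.mem_compl_iff, Set.mem_setOf_eq, not_lt] at hω ⊢
            have : (j:ℝ) ≤ k := Nat.cast_le.mpr hjk
            linarith
          simp [hω, hω']
        · simp [hω]
      have htend : ∀ ω, Tendsto (fun j => h j ω) atTop (𝓝 (g ω)) := by
        intro ω
        obtain ⟨j₀, hj₀⟩ := exists_nat_ge (|f ω| - 1 / l₀)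
        refine tendsto_atTop_of_eventually_const (i₀ := j₀) fun j hj => ?_
        have hω : ω ∈ (S j)ᶜ := by
          simp only [hS, Set.mem_compl_iff, Set.mem_setOf_eq, not_lt]
          have : (j₀:ℝ) ≤ j := Nat.cast_le.mpr hj
          linarith
        simp [hh, hω]
      have hlim : Tendsto (fun j => ∫⁻ ω, h j ω ∂P) atTop (𝓝 I) :=
        lintegral_tendsto_of_tendsto_of_monotone
          (fun j => (hgmeas.indicator (hSmeas j).compl).aemeasurable)
          (Filter.Eventually.of_forall hmono) (Filter.Eventually.of_forall htend)
      have heNe : e ≠ 0 := by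
        rw [he]; exact (ENNReal.ofReal_pos.mpr (by norm_num)).ne'
      have hINe : I ≠ 0 := (lt_of_le_of_lt zero_le hIe).ne'
      have hIe' : I - e < I := ENNReal.sub_lt_self hIfin hINe heNe
      have hev : ∀ᶠ j in atTop, I - e < ∫⁻ ω, h j ω ∂P :=
        hlim.eventually (eventually_gt_nhds hIe')
      obtain ⟨j, hj⟩ := hev.exists
      refine ⟨j, ?_⟩
      have hsplit : ∫⁻ ω, (S j).indicator g ω ∂P + ∫⁻ ω, h j ω ∂P = I := by
        rw [← lintegral_add_left (hgmeas.indicator (hSmeas j))]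
        simp only [hh, hcompl]
        exact hI.symm
      have hhle : ∫⁻ ω, h j ω ∂P ≤ I := le_trans (le_add_self) hsplit.le
      have hEq : ∫⁻ ω, (S j).indicator g ω ∂P = I - ∫⁻ ω, h j ω ∂P :=
        ENNReal.eq_sub_of_add_eq (lt_of_le_of_lt hhle hfin).ne hsplit
      rw [hEq]
      calc I - ∫⁻ ω, h j ω ∂P ≤ I - (I - e) := tsub_le_tsub_left hj.le _
        _ = e := ENNReal.sub_sub_cancel hIfin hIe.le
  obtain ⟨j, hj⟩ := hexj
  set l : ℝ := (2 * R) * (1 / l₀ + j) with hl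
  have hcpos : (0:ℝ) < 1 / l₀ + j := by positivity
  have hlpos : (0:ℝ) < l := by positivity
  refine ⟨l, hlpos, ?_⟩
  have hbound : ∀ ω, ENNReal.ofReal (conj Φ (f ω / l)) ≤ e + (S j).indicator g ω := by
    intro ω
    by_cases hω : ω ∈ S j
    · -- |f ω| large: compare with l₀ * f ω
      have h2 : (1:ℝ) ≤ l₀ * l := by
        have h0 : l₀ * l = 2 * R + 2 * R * (l₀ * j) := by
          rw [hl]; field_simp
        rw [h0]
        nlinarith [hR1, mul_nonneg hRpos.le (mul_nonneg hl₀.le (Nat.cast_nonneg (α := ℝ) j))]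
      have h1 : |f ω / l| ≤ |l₀ * f ω| := by
        rw [abs_div, abs_of_pos hlpos, abs_mul, abs_of_pos hl₀, div_le_iff₀ hlpos]
        nlinarith [abs_nonneg (f ω)]
      have h2 := conj_mono_abs hΦ h1
      rw [Set.indicator_of_mem hω]
      exact le_trans (ENNReal.ofReal_le_ofReal h2) le_add_self
    · -- |f ω| small : conj ≤ 1/2
      have hωs : |f ω| ≤ 1 / l₀ + j := by
        simpa only [hS, Set.mem_setOf_eq, not_lt] using hω
      have h1 : |f ω / l| ≤ 1 / (2 * R) := by
        rw [abs_div, abs_of_pos hlpos, div_le_div_iff₀ hlpos (by positivity)]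
        calc |f ω| * (2 * R) ≤ (1 / l₀ + j) * (2 * R) :=
              mul_le_mul_of_nonneg_right hωs (by positivity)
          _ = 1 * (2 * R * (1 / l₀ + j)) := by ring
          _ = 1 * l := by rw [hl]
      have h2 : conj Φ (f ω / l) ≤ 1 / 2 := by
        have h3 : conj Φ (f ω / l) ≤ conj Φ (1 / (2 * R)) := by
          apply conj_mono_abs hΦ
          rw [abs_of_pos (by positivity : (0:ℝ) < 1 / (2 * R))]
          exact h1
        have h4 : conj Φ (1 / (2 * R)) ≤ R * (1 / (2 * R)) := by
          apply hRs _ (by positivity)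
          rw [div_le_one (by positivity)]; linarith
        have h5 : R * (1 / (2 * R)) = 1 / 2 := by field_simp
        linarith
      rw [Set.indicator_of_notMem hω, add_zero]
      exact ENNReal.ofReal_le_ofReal h2
  calc ∫⁻ ω, ENNReal.ofReal (conj Φ (f ω / l)) ∂P
      ≤ ∫⁻ ω, (e + (S j).indicator g ω) ∂P := lintegral_mono hbound
    _ = e * P Set.univ + ∫⁻ ω, (S j).indicator g ω ∂P := by
        rw [lintegral_add_left measurable_const, lintegral_const]
    _ ≤ e + e := by
        rw [measure_univ, mul_one]
        exact add_le_add le_rfl hj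
    _ ≤ 1 := by
        rw [he, ← ENNReal.ofReal_add (by norm_num) (by norm_num)]
        norm_num

lemma tail_small (P : Measure Ω) [IsProbabilityMeasure P] {A : ℕ → Set Ω}
    (hAmeas : ∀ n, MeasurableSet (A n)) (hdisj : Pairwise (Function.onFun Disjoint A)) :
    ∀ δ : ℝ≥0∞, 0 < δ → ∃ m : ℕ, P (⋃ k ∈ {k : ℕ | m ≤ k}, A k) ≤ δ := by
  have ht : ∑' k, P (A k) ≠ ⊤ := by
    rw [← measure_iUnion hdisj hAmeas]
    exact (measure_lt_top P _).ne
  have htend := ENNReal.tendsto_sum_nat_add (fun k => P (A k)) ht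
  rw [ENNReal.tendsto_atTop_zero] at htend
  intro δ hδ
  obtain ⟨m, hm⟩ := htend δ hδ
  refine ⟨m, le_trans ?_ (hm m le_rfl)⟩
  have hsub : (⋃ k ∈ {k : ℕ | m ≤ k}, A k) ⊆ ⋃ j : ℕ, A (j + m) := by
    intro ω hω
    simp only [Set.mem_iUnion, Set.mem_setOf_eq] at hω ⊢
    obtain ⟨k, hk, hωk⟩ := hω
    exact ⟨k - m, by rwa [Nat.sub_add_cancel hk]⟩
  exact le_trans (measure_mono hsub) (measure_iUnion_le _)

end MeasureAux

lemma summable_aux : Summable (fun n : ℕ => ((n:ℝ) + 1) * (2⁻¹:ℝ) ^ n) := by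
  have h1 : Summable (fun n : ℕ => (n:ℝ) ^ 1 * (2⁻¹:ℝ) ^ n) :=
    summable_pow_mul_geometric_of_norm_lt_one 1 (by rw [norm_inv]; norm_num)
  have h2 : Summable (fun n : ℕ => (2⁻¹:ℝ) ^ n) :=
    summable_geometric_of_lt_one (by norm_num) (by norm_num)
  refine (h1.add h2).congr fun n => ?_
  ring

/-- If `Φ ∈ Δ₂` and `(ξ_n)` is a norm-bounded disjointly
supported sequence in `L_{Φ*}`, then it has a sequence of forward convex
combinations `ξ̄_n ∈ conv(ξ_k ; k ≥ n)` that is order bounded in `L_{Φ*}`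
and norm null. -/
theorem statement7
    {Ω : Type*} [MeasurableSpace Ω] (P : Measure Ω) [IsProbabilityMeasure P]
    (Φ : ℝ → ℝ) (hΦ : IsYoung Φ) (hΔ : Delta2 Φ)
    (ξ : ℕ → Ω → ℝ) (A : ℕ → Set Ω)
    (hAmeas : ∀ n, MeasurableSet (A n)) (hdisj : Pairwise (Function.onFun Disjoint A))
    (hsupp : ∀ n, ∀ᵐ ω ∂P, ω ∉ A n → ξ n ω = 0)
    (hmem : ∀ n, MemOrlicz P (conj Φ) (ξ n))
    (hbdd : ∃ M : ℝ, ∀ n, luxNorm P (conj Φ) (ξ n) ≤ M) :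
    ∃ ξb : ℕ → Ω → ℝ, FwdConvComb ξ ξb ∧ supMem P (conj Φ) ξb ∧
      Tendsto (fun n => luxNorm P (conj Φ) (ξb n)) atTop (𝓝 0) := by
  classical
  obtain ⟨M, hM⟩ := hbdd
  obtain ⟨ℓ, y₀, hℓ2, hy₀0, hnab⟩ := nabla2 hΦ hΔ
  have hℓpos : (0:ℝ) < ℓ := by linarith
  have h2ℓpos : (0:ℝ) < 2 * ℓ := by linarith
  have hiter := conj_div_pow_le hΦ hℓ2 hy₀0 hnab
  set cJ : ℝ := 2 * conj Φ y₀ with hcJ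
  have hcJ0 : 0 ≤ cJ := by
    have := conj_nonneg hΦ y₀; rw [hcJ]; linarith
  set D : ℝ := M + 1 with hD
  have hM0 : 0 ≤ M := le_trans (lux_nonneg P (conj Φ) (ξ 0)) (hM 0)
  have hDpos : (0:ℝ) < D := by rw [hD]; linarith
  -- uniform modular bound
  have hint : ∀ k, ∫⁻ ω, ENNReal.ofReal (conj Φ (ξ k ω / D)) ∂P ≤ 1 := by
    intro k
    obtain ⟨l₀, hl₀, hfin⟩ := (hmem k).2
    obtain ⟨l, hl, hle⟩ := exists_integral_le_one P hΦ (hmem k).1 hl₀ hfin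
    have hne : Set.Nonempty {l' : ℝ | 0 < l' ∧
        ∫⁻ ω, ENNReal.ofReal (conj Φ (ξ k ω / l')) ∂P ≤ 1} := ⟨l, hl, hle⟩
    have hlt : sInf {l' : ℝ | 0 < l' ∧
        ∫⁻ ω, ENNReal.ofReal (conj Φ (ξ k ω / l')) ∂P ≤ 1} < D := by
      have h1 := hM k
      rw [luxNorm] at h1
      rw [hD]; exact lt_of_le_of_lt h1 (by linarith)
    obtain ⟨l', hl'mem, hl'D⟩ := exists_lt_of_csInf_lt hne hlt
    refine le_trans (lintegral_mono fun ω =>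
      ENNReal.ofReal_le_ofReal (conj_mono_abs hΦ ?_)) hl'mem.2
    rw [abs_div, abs_div, abs_of_pos hDpos, abs_of_pos hl'mem.1]
    exact div_le_div_of_nonneg_left (abs_nonneg _) hl'mem.1 hl'D.le
  -- block sizes
  set m : ℕ → ℕ := fun n => (n + 1) * ⌈ℓ ^ n⌉₊ with hm
  have hm1 : ∀ n, 1 ≤ m n := fun n =>
    Nat.mul_pos (Nat.succ_pos n) (Nat.ceil_pos.mpr (pow_pos hℓpos n))
  have hmpos : ∀ n, (0:ℝ) < (m n : ℝ) := fun n => by exact_mod_cast hm1 n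
  have hmge' : ∀ n : ℕ, ((n:ℝ) + 1) * ℓ ^ n ≤ (m n : ℝ) := by
    intro n
    rw [hm]; push_cast
    exact mul_le_mul_of_nonneg_left (Nat.le_ceil _) (by positivity)
  have hmge : ∀ n : ℕ, ℓ ^ n ≤ (m n : ℝ) := by
    intro n
    refine le_trans ?_ (hmge' n)
    nlinarith [pow_pos hℓpos n, Nat.cast_nonneg (α := ℝ) n]
  have hmle : ∀ n : ℕ, (m n : ℝ) ≤ ((n:ℝ) + 1) * (ℓ ^ n + 1) := by
    intro n
    rw [hm]; push_cast
    have h1 := Nat.ceil_lt_add_one (pow_pos hℓpos n).le (R := ℝ)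
    have h2 : (0:ℝ) ≤ (n:ℝ) + 1 := by positivity
    nlinarith
  -- geometric weights
  set q : ℕ → ℝ := fun n => (2⁻¹:ℝ) ^ n with hq
  have hqpos : ∀ n, (0:ℝ) < q n := fun n => by rw [hq]; positivity
  -- the key numeric estimate
  have rcal : ∀ n : ℕ, ((2 * ℓ) ^ n)⁻¹ * (m n : ℝ) ≤ 2 * ((n:ℝ) + 1) * q n := by
    intro n
    have hp : (0:ℝ) < (2:ℝ) ^ n := by positivity
    have hr1 : (1:ℝ) ≤ ℓ ^ n := one_le_pow₀ (by linarith)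
    have hrpos : (0:ℝ) < ℓ ^ n := pow_pos hℓpos n
    have hpow : (2 * ℓ) ^ n = 2 ^ n * ℓ ^ n := mul_pow 2 ℓ n
    have hqn : q n = ((2:ℝ) ^ n)⁻¹ := by
      simp only [hq]
      exact inv_pow 2 n
    rw [hpow, hqn]
    rw [mul_inv]
    -- (2^n)⁻¹ * (ℓ^n)⁻¹ * m n ≤ 2 (n+1) (2^n)⁻¹
    have key : (m n : ℝ) ≤ 2 * ((n:ℝ) + 1) * ℓ ^ n := by
      refine le_trans (hmle n) ?_
      nlinarith [Nat.cast_nonneg (α := ℝ) n]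
    calc (2 ^ n : ℝ)⁻¹ * (ℓ ^ n)⁻¹ * (m n : ℝ)
        ≤ (2 ^ n : ℝ)⁻¹ * (ℓ ^ n)⁻¹ * (2 * ((n:ℝ) + 1) * ℓ ^ n) := by
          refine mul_le_mul_of_nonneg_left key (by positivity)
      _ = 2 * ((n:ℝ) + 1) * (2 ^ n : ℝ)⁻¹ := by
          field_simp
  -- tails
  set δ : ℕ → ℝ≥0∞ := fun n => ENNReal.ofReal (q n / (cJ + 1)) with hδ
  have hδpos : ∀ n, 0 < δ n := fun n =>
    ENNReal.ofReal_pos.mpr (by have := hqpos n; positivity)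
  have hch : ∀ n, ∃ a : ℕ, P (⋃ k ∈ {k : ℕ | a ≤ k}, A k) ≤ δ n :=
    fun n => tail_small P hAmeas hdisj (δ n) (hδpos n)
  choose c hc using hch
  -- the recursive block starts
  set a : ℕ → ℕ := fun n => Nat.rec (c 0) (fun n an => max (an + m n + 1) (c (n + 1))) n
    with ha
  have ha0 : a 0 = c 0 := rfl
  have hasucc : ∀ n, a (n + 1) = max (a n + m n + 1) (c (n + 1)) := fun n => rfl
  have hagap : ∀ n, a n + m n < a (n + 1) := by
    intro n; rw [hasucc]
    exact lt_of_lt_of_le (Nat.lt_succ_self _) (le_max_left _ _)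
  have hamono : StrictMono a :=
    strictMono_nat_of_lt_succ fun n => lt_of_le_of_lt (Nat.le_add_right _ _) (hagap n)
  have hac : ∀ n, c n ≤ a n := by
    intro n
    cases n with
    | zero => exact le_of_eq ha0.symm
    | succ n => rw [hasucc]; exact le_max_right _ _
  have haself : ∀ n, n ≤ a n := by
    intro n
    induction n with
    | zero => exact Nat.zero_le _
    | succ n ih =>
      have := hagap n
      have h2 : a n + 1 ≤ a (n + 1) := by omega
      omega
  have htail : ∀ n, P (⋃ k ∈ {k : ℕ | a n ≤ k}, A k) ≤ δ n := by
    intro n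
    refine le_trans (measure_mono ?_) (hc n)
    refine Set.biUnion_subset_biUnion_left ?_
    intro k hk
    exact le_trans (hac n) hk
  -- blocks
  set B : ℕ → Finset ℕ := fun n => Finset.Ico (a n) (a n + m n) with hB
  have hcard : ∀ n, (B n).card = m n := by
    intro n; rw [hB]; simp
  have hBge : ∀ n k, k ∈ B n → n ≤ k := by
    intro n k hk
    exact le_trans (haself n) (Finset.mem_Ico.mp hk).1
  have hBdisj : ∀ {n₁ n₂ k : ℕ}, k ∈ B n₁ → k ∈ B n₂ → n₁ = n₂ := by
    intro n₁ n₂ k h1 h2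
    by_contra hne
    rw [hB] at h1 h2
    have h1' := Finset.mem_Ico.mp h1
    have h2' := Finset.mem_Ico.mp h2
    rcases Nat.lt_or_ge n₁ n₂ with h | h
    · have h3 : a n₁ + m n₁ ≤ a n₂ := le_trans (hagap n₁).le (hamono.le_iff_le.mpr h)
      omega
    · have h' : n₂ < n₁ := by omega
      have h3 : a n₂ + m n₂ ≤ a n₁ := le_trans (hagap n₂).le (hamono.le_iff_le.mpr h')
      omega
  -- the forward convex combinations
  set ξb : ℕ → Ω → ℝ := fun n ω => (∑ k ∈ B n, ξ k ω) / (m n : ℝ) with hξb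
  have hξbmeas : ∀ n, Measurable (ξb n) := fun n =>
    (Finset.measurable_sum _ fun k _ => (hmem k).1).div_const _
  -- pointwise structure
  have fact1 : ∀ ω, (∀ k, ω ∉ A k → ξ k ω = 0) → ∀ n k, k ∈ B n → ω ∈ A k →
      ξb n ω = ξ k ω / (m n : ℝ) := by
    intro ω hω n k hk hA
    simp only [hξb]
    congr 1
    refine Finset.sum_eq_single_of_mem k hk fun j hj hjk => ?_
    refine hω j fun hAj => ?_
    exact (Set.disjoint_left.mp (hdisj hjk) hAj) hA
  have fact2 : ∀ ω, (∀ k, ω ∉ A k → ξ k ω = 0) → ∀ n, (∀ k ∈ B n, ω ∉ A k) →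
      ξb n ω = 0 := by
    intro ω hω n h
    simp only [hξb]
    rw [Finset.sum_eq_zero fun k hk => hω k (h k hk), zero_div]
  have hG : ∀ᵐ ω ∂P, ∀ k, ω ∉ A k → ξ k ω = 0 := ae_all_iff.mpr hsupp
  -- the indicator functions
  set F : ℕ → Ω → ℝ≥0∞ := fun k =>
    (A k).indicator fun ω => ENNReal.ofReal (conj Φ (ξ k ω / D)) with hF
  have hFmeas : ∀ k, Measurable (F k) := fun k =>
    (((conj_measurable hΦ).comp ((hmem k).1.div_const D)).ennreal_ofReal).indicator
      (hAmeas k)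
  have hFint : ∀ k, ∫⁻ ω, F k ω ∂P ≤ 1 := fun k =>
    le_trans (lintegral_mono fun ω => Set.indicator_le_self _ _ ω) (hint k)
  have hFsum_meas : ∀ n, Measurable fun ω => ∑ k ∈ B n, F k ω := fun n =>
    Finset.measurable_sum _ fun k _ => hFmeas k
  have hFsum_int : ∀ n, ∫⁻ ω, ∑ k ∈ B n, F k ω ∂P ≤ (m n : ℝ≥0∞) := by
    intro n
    rw [lintegral_finset_sum _ fun k _ => hFmeas k]
    calc ∑ k ∈ B n, ∫⁻ ω, F k ω ∂P ≤ ∑ _k ∈ B n, (1:ℝ≥0∞) :=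
          Finset.sum_le_sum fun k _ => hFint k
      _ = (B n).card := by simp
      _ = (m n : ℝ≥0∞) := by rw [hcard]
  -- the norms
  set l : ℕ → ℝ := fun n => D * ℓ ^ n / (m n : ℝ) with hldef
  have hlpos : ∀ n, 0 < l n := fun n => by
    rw [hldef]
    have := hmpos n
    positivity
  have hlle : ∀ n, l n ≤ D / ((n:ℝ) + 1) := by
    intro n
    rw [hldef, div_le_div_iff₀ (hmpos n) (by positivity)]
    have := hmge' n
    nlinarith [pow_pos hℓpos n]
  -- Claim A : a.e. pointwise bound for each n
  have claimA : ∀ n, ∀ᵐ ω ∂P, ENNReal.ofReal (conj Φ (ξb n ω / l n)) ≤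
      ENNReal.ofReal (((2 * ℓ) ^ n)⁻¹) * ∑ k ∈ B n, F k ω
      + (⋃ k ∈ B n, A k).indicator (fun _ => ENNReal.ofReal cJ) ω := by
    intro n
    filter_upwards [hG] with ω hω
    by_cases hU : ∃ k ∈ B n, ω ∈ A k
    · obtain ⟨k, hkB, hkA⟩ := hU
      have hmn := hmpos n
      have h1 : ξb n ω / l n = (ξ k ω / D) / ℓ ^ n := by
        rw [fact1 ω hω n k hkB hkA]
        simp only [hldef]
        have hpn : (0:ℝ) < ℓ ^ n := pow_pos hℓpos n
        rw [div_div_div_comm, div_self (ne_of_gt hmn), div_one, div_div]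
      have h2 : conj Φ (ξb n ω / l n) = conj Φ (|ξ k ω / D| / ℓ ^ n) := by
        rw [h1, ← conj_abs hΦ ((ξ k ω / D) / ℓ ^ n), abs_div,
          abs_of_pos (pow_pos hℓpos n)]
      have h3 := hiter n |ξ k ω / D| (abs_nonneg _)
      rw [conj_abs hΦ] at h3
      have h4 : conj Φ (ξb n ω / l n) ≤ conj Φ (ξ k ω / D) / (2 * ℓ) ^ n + cJ := by
        rw [h2, hcJ]; exact h3
      refine le_trans (ENNReal.ofReal_le_ofReal h4) ?_
      refine le_trans ENNReal.ofReal_add_le (add_le_add ?_ ?_)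
      · have h5 : conj Φ (ξ k ω / D) / (2 * ℓ) ^ n
            = ((2 * ℓ) ^ n)⁻¹ * conj Φ (ξ k ω / D) := by
          rw [div_eq_inv_mul]
        rw [h5, ENNReal.ofReal_mul (by positivity)]
        refine mul_le_mul_right ?_ _
        refine le_trans ?_
          (Finset.single_le_sum (f := fun k => F k ω) (fun k _ => zero_le) hkB)
        simp only [hF]
        rw [Set.indicator_of_mem hkA]
      · have hmemU : ω ∈ ⋃ k ∈ B n, A k := Set.mem_iUnion₂.mpr ⟨k, hkB, hkA⟩
        rw [Set.indicator_of_mem hmemU]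
    · push_neg at hU
      have h1 : ξb n ω = 0 := fact2 ω hω n hU
      rw [h1, zero_div, conj_zero hΦ]
      simp
  -- integral bound for each n
  have hIntn : ∀ n, ∫⁻ ω, ENNReal.ofReal (conj Φ (ξb n ω / l n)) ∂P ≤
      ENNReal.ofReal (((2 * ℓ) ^ n)⁻¹ * (m n : ℝ)) + ENNReal.ofReal (q n) := by
    intro n
    refine le_trans (lintegral_mono_ae (claimA n)) ?_
    rw [lintegral_add_left ((hFsum_meas n).const_mul _)]
    refine add_le_add ?_ ?_
    · rw [lintegral_const_mul _ (hFsum_meas n)]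
      refine le_trans (mul_le_mul_right (hFsum_int n) _) ?_
      rw [ENNReal.ofReal_mul (by positivity), ENNReal.ofReal_natCast]
    · have hUmeas : MeasurableSet (⋃ k ∈ B n, A k) :=
        (B n).measurableSet_biUnion fun k _ => hAmeas k
      rw [lintegral_indicator hUmeas, setLIntegral_const]
      have hPU : P (⋃ k ∈ B n, A k) ≤ δ n := by
        refine le_trans (measure_mono ?_) (htail n)
        intro ω hω
        simp only [Set.mem_iUnion, Set.mem_setOf_eq] at hω ⊢
        obtain ⟨k, hk, h⟩ := hω
        exact ⟨k, (Finset.mem_Ico.mp hk).1, h⟩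
      calc ENNReal.ofReal cJ * P (⋃ k ∈ B n, A k)
          ≤ ENNReal.ofReal cJ * δ n := mul_le_mul_right hPU _
        _ = ENNReal.ofReal (cJ * (q n / (cJ + 1))) := by
            simp only [hδ]
            rw [← ENNReal.ofReal_mul hcJ0]
        _ ≤ ENNReal.ofReal (q n) := by
            refine ENNReal.ofReal_le_ofReal ?_
            rw [mul_div_assoc']
            rw [div_le_iff₀ (by linarith : (0:ℝ) < cJ + 1)]
            nlinarith [hqpos n]
  -- eventual bound for the modular
  have hsum1 : Summable fun n : ℕ => 2 * ((n:ℝ) + 1) * q n + q n := by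
    have h1 : Summable fun n : ℕ => ((n:ℝ) + 1) * (2⁻¹:ℝ) ^ n := summable_aux
    have h2 : Summable fun n : ℕ => (2⁻¹:ℝ) ^ n :=
      summable_geometric_of_lt_one (by norm_num) (by norm_num)
    refine ((h1.mul_left 2).add h2).congr fun n => ?_
    simp only [hq]; ring
  have hev1 : ∀ᶠ n : ℕ in atTop, 2 * ((n:ℝ) + 1) * q n + q n ≤ 1 := by
    have := hsum1.tendsto_atTop_zero.eventually_lt_const (zero_lt_one)
    filter_upwards [this] with n hn using hn.le
  -- 1. forward convex combinations
  have hfwd : FwdConvComb ξ ξb := by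
    intro n
    have hws : (0:ℝ) < ∑ _k ∈ B n, (1:ℝ) := by
      rw [Finset.sum_const, hcard]
      simp only [nsmul_eq_mul, mul_one]
      exact hmpos n
    have hz : ∀ k ∈ B n, ξ k ∈ {g : Ω → ℝ | ∃ k' ≥ n, g = ξ k'} :=
      fun k hk => ⟨k, hBge n k hk, rfl⟩
    have hmem' := Finset.centerMass_mem_convexHull (B n)
      (fun k _ => zero_le_one) hws hz
    have hcm : (B n).centerMass (fun _ => (1:ℝ)) (fun k => ξ k) = ξb n := by
      funext ω
      rw [Finset.centerMass]
      simp only [Finset.sum_const, hcard, nsmul_eq_mul, mul_one, one_smul,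
        Pi.smul_apply, smul_eq_mul, Finset.sum_apply]
      simp only [hξb]
      rw [inv_mul_eq_div]
    rw [← hcm]
    exact hmem'
  -- 2. order boundedness (a.e. bdd above)
  have hb_ae : ∀ᵐ ω ∂P, BddAbove (Set.range fun n => |ξb n ω|) := by
    filter_upwards [hG] with ω hω
    by_cases hA' : ∃ k, ω ∈ A k
    · obtain ⟨k₀, hk₀⟩ := hA'
      refine ⟨|ξ k₀ ω|, ?_⟩
      rintro x ⟨n, rfl⟩
      show |ξb n ω| ≤ |ξ k₀ ω|
      by_cases hkB : k₀ ∈ B n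
      · rw [fact1 ω hω n k₀ hkB hk₀, abs_div, abs_of_pos (hmpos n)]
        exact div_le_self (abs_nonneg _) (by exact_mod_cast hm1 n)
      · have hnone : ∀ k ∈ B n, ω ∉ A k := by
          intro k hk hAk
          have hne : k ≠ k₀ := fun h => hkB (h ▸ hk)
          exact (Set.disjoint_left.mp (hdisj hne) hAk) hk₀
        rw [fact2 ω hω n hnone]
        simp [abs_nonneg]
    · push_neg at hA'
      refine ⟨0, ?_⟩
      rintro x ⟨n, rfl⟩
      show |ξb n ω| ≤ 0
      rw [fact2 ω hω n fun k _ => hA' k]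
      simp
  -- 2'. the sup is in the Orlicz space
  have hsmeas : Measurable fun ω => ⨆ n, |ξb n ω| :=
    Measurable.iSup fun n => (hξbmeas n).abs
  set H : Ω → ℝ≥0∞ := fun ω =>
    (∑' n, ENNReal.ofReal (((2 * ℓ) ^ n)⁻¹) * ∑ k ∈ B n, F k ω)
    + ENNReal.ofReal cJ with hH
  have claimB : ∀ᵐ ω ∂P,
      ENNReal.ofReal (conj Φ (D⁻¹ * (⨆ n, |ξb n ω|))) ≤ H ω := by
    filter_upwards [hG, hb_ae] with ω hω hbdd'
    by_cases hA' : ∃ n₀, ∃ k₀ ∈ B n₀, ω ∈ A k₀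
    · obtain ⟨n₀, k₀, hk₀B, hk₀A⟩ := hA'
      have hsle : (⨆ n, |ξb n ω|) ≤ |ξ k₀ ω| / (m n₀ : ℝ) := by
        refine ciSup_le fun n => ?_
        show |ξb n ω| ≤ |ξ k₀ ω| / (m n₀ : ℝ)
        by_cases hn : n = n₀
        · subst hn
          rw [fact1 ω hω n k₀ hk₀B hk₀A, abs_div, abs_of_pos (hmpos n)]
        · have hnone : ∀ k ∈ B n, ω ∉ A k := by
            intro k hk hAk
            have hkk : k = k₀ := by
              by_contra hkk
              exact (Set.disjoint_left.mp (hdisj hkk) hAk) hk₀A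
            exact hn (hBdisj (hkk ▸ hk) hk₀B)
          rw [fact2 ω hω n hnone]
          simp only [abs_zero]
          positivity
      have hs0 : 0 ≤ ⨆ n, |ξb n ω| := Real.iSup_nonneg fun n => abs_nonneg _
      have h1 : conj Φ (D⁻¹ * (⨆ n, |ξb n ω|)) ≤
          conj Φ ((|ξ k₀ ω| / D) / ℓ ^ n₀) := by
        refine conj_mono hΦ (by positivity) ?_
        calc D⁻¹ * (⨆ n, |ξb n ω|) ≤ D⁻¹ * (|ξ k₀ ω| / (m n₀ : ℝ)) :=
              mul_le_mul_of_nonneg_left hsle (by positivity)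
          _ = |ξ k₀ ω| / (D * (m n₀ : ℝ)) := by
              have h1 : (m n₀ : ℝ) ≠ 0 := (hmpos n₀).ne'
              field_simp
          _ ≤ |ξ k₀ ω| / (D * ℓ ^ n₀) := by
              refine div_le_div_of_nonneg_left (abs_nonneg _) (by positivity) ?_
              exact mul_le_mul_of_nonneg_left (hmge n₀) hDpos.le
          _ = (|ξ k₀ ω| / D) / ℓ ^ n₀ := by rw [div_div]
      have h2 := hiter n₀ (|ξ k₀ ω| / D) (by positivity)
      have h3 : conj Φ (|ξ k₀ ω| / D) = conj Φ (ξ k₀ ω / D) := by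
        rw [show |ξ k₀ ω| / D = |ξ k₀ ω / D| by rw [abs_div, abs_of_pos hDpos],
          conj_abs hΦ]
      have h4 : conj Φ (D⁻¹ * (⨆ n, |ξb n ω|)) ≤
          conj Φ (ξ k₀ ω / D) / (2 * ℓ) ^ n₀ + cJ := by
        rw [hcJ]; rw [h3] at h2; linarith
      refine le_trans (ENNReal.ofReal_le_ofReal h4) ?_
      refine le_trans ENNReal.ofReal_add_le ?_
      rw [hH]
      refine add_le_add ?_ le_rfl
      rw [div_eq_inv_mul, ENNReal.ofReal_mul (by positivity)]
      refine le_trans ?_ (ENNReal.le_tsum n₀)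
      refine mul_le_mul_right ?_ _
      refine le_trans ?_
        (Finset.single_le_sum (f := fun k => F k ω) (fun k _ => zero_le) hk₀B)
      simp only [hF]
      rw [Set.indicator_of_mem hk₀A]
    · push_neg at hA'
      have hall : ∀ n, ξb n ω = 0 := fun n =>
        fact2 ω hω n fun k hk => hA' n k hk
      have hs0 : (⨆ n, |ξb n ω|) = 0 := by
        have : (fun n => |ξb n ω|) = fun _ => (0:ℝ) := funext fun n => by
          rw [hall n, abs_zero]
        rw [this, ciSup_const]
      rw [hs0, mul_zero, conj_zero hΦ]
      simp
  have hHint : ∫⁻ ω, H ω ∂P < ⊤ := by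
    have hHeq : ∫⁻ ω, H ω ∂P =
        (∑' n, ∫⁻ ω, ENNReal.ofReal (((2 * ℓ) ^ n)⁻¹) * ∑ k ∈ B n, F k ω ∂P)
        + ENNReal.ofReal cJ * P Set.univ := by
      rw [hH]
      rw [lintegral_add_right _ measurable_const, lintegral_const]
      congr 1
      rw [lintegral_tsum fun n => ((hFsum_meas n).const_mul _).aemeasurable]
    rw [hHeq, measure_univ, mul_one]
    have hterm : ∀ n, ∫⁻ ω, ENNReal.ofReal (((2 * ℓ) ^ n)⁻¹) * ∑ k ∈ B n, F k ω ∂P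
        ≤ ENNReal.ofReal (2 * ((n:ℝ) + 1) * q n) := by
      intro n
      rw [lintegral_const_mul _ (hFsum_meas n)]
      refine le_trans (mul_le_mul_right (hFsum_int n) _) ?_
      rw [← ENNReal.ofReal_natCast (m n), ← ENNReal.ofReal_mul (by positivity)]
      exact ENNReal.ofReal_le_ofReal (rcal n)
    refine ENNReal.add_lt_top.mpr ⟨?_, ENNReal.ofReal_lt_top⟩
    calc ∑' n, ∫⁻ ω, ENNReal.ofReal (((2 * ℓ) ^ n)⁻¹) * ∑ k ∈ B n, F k ω ∂P
        ≤ ∑' n : ℕ, ENNReal.ofReal (2 * ((n:ℝ) + 1) * q n) :=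
          ENNReal.tsum_le_tsum hterm
      _ = ENNReal.ofReal (∑' n : ℕ, 2 * ((n:ℝ) + 1) * q n) := by
          refine (ENNReal.ofReal_tsum_of_nonneg (fun n => ?_) ?_).symm
          · have := hqpos n; positivity
          · have h1 : Summable fun n : ℕ => ((n:ℝ) + 1) * (2⁻¹:ℝ) ^ n := summable_aux
            refine (h1.mul_left 2).congr fun n => ?_
            simp only [hq]; ring
      _ < ⊤ := ENNReal.ofReal_lt_top
  have hsup_mem : MemOrlicz P (conj Φ) fun ω => ⨆ n, |ξb n ω| := by
    refine ⟨hsmeas, D⁻¹, inv_pos.mpr hDpos, ?_⟩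
    exact lt_of_le_of_lt (lintegral_mono_ae claimB) hHint
  -- 3. the norms tend to zero
  have hlux : ∀ᶠ n in atTop, luxNorm P (conj Φ) (ξb n) ≤ D / ((n:ℝ) + 1) := by
    filter_upwards [hev1] with n hn
    have h1 : ∫⁻ ω, ENNReal.ofReal (conj Φ (ξb n ω / l n)) ∂P ≤ 1 := by
      refine le_trans (hIntn n) ?_
      rw [← ENNReal.ofReal_add (by positivity) (hqpos n).le]
      refine le_trans (ENNReal.ofReal_le_ofReal ?_) ENNReal.ofReal_one.le
      linarith [rcal n]
    exact le_trans (lux_le P (conj Φ) (ξb n) (hlpos n) h1) (hlle n)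
  have hDiv : Tendsto (fun n : ℕ => D / ((n:ℝ) + 1)) atTop (𝓝 0) := by
    have h1 := (tendsto_const_div_atTop_nhds_zero_nat D).comp (tendsto_add_atTop_nat 1)
    refine h1.congr fun n => ?_
    simp only [Function.comp_apply]
    push_cast
    ring
  refine ⟨ξb, hfwd, ⟨hb_ae, hsup_mem⟩, ?_⟩
  refine tendsto_of_tendsto_of_tendsto_of_le_of_le' tendsto_const_nhds hDiv ?_ hlux
  exact Eventually.of_forall fun n => lux_nonneg P (conj Φ) (ξb n)


end OrliczPaper
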